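/- arXiv:math/0601360 — 4 statements merged into one kernel-verified Lean document; each statement's English description precedes it below -/
import Mathlib

section
/- Let p be an odd prime, q a power of p, and consider the twisted polynomial ring F_q[F] where F acts as the q-power Frobenius (so multiplication satisfies F·c = c^q·F for c in F_q). Define the ring homomorphism φ from F_q[t] to F_q[F] determined by φ(t) = F + F^2. Then for a ∈ F_q[t], the element φ(a) is a sum of exactly two distinct powers of F (i.e., φ(a) = F^n + F^m for some naturals n ≠ m) if and only if a = t^(p^k) for some k ≥ 0, in which case φ(a) = F^(p^k) + F^(2p^k). -/
/-!
The substitution `X ↦ -1 - X` fixes `X + X ^ 2`, so `X ^ n + X ^ m = a (X + X ^ 2)` is invariant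
under it. Comparing the coefficients of degree `0`, `1`, `m - 1` and `m` forces either
`(n, m) = (1, 2)`, whence `a = X`, or `p ∣ n` and `p ∣ m`. In the latter case the derivative of
`a (X + X ^ 2)` vanishes, hence so does that of `a`, and `a = b (X ^ p)`. Since
`(X + X ^ 2) ^ p = X ^ p + X ^ (2 * p)` in characteristic `p`, `b` satisfies the same equation
with `(n / p, m / p)`, and we descend.
-/

open Polynomial

namespace Polynomial

section CommRing

variable {R : Type*} [CommRing R]

lemma coeff_neg_one_sub_X_pow (j i : ℕ) :
    ((-1 - X : R[X]) ^ j).coeff i = (-1) ^ j * j.choose i := by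
  rw [show (-1 - X : R[X]) = C (-1) * (X + 1) by simp; ring, mul_pow, ← C_pow, coeff_C_mul,
    coeff_X_add_one_pow]

lemma X_add_X_sq_comp_neg_one_sub_X : (X + X ^ 2 : R[X]).comp (-1 - X) = X + X ^ 2 := by
  simp only [add_comp, X_comp, X_pow_comp]
  ring

lemma eq_one_and_eq_two_or_cast_eq_zero_of_comp_neg_one_sub_X (h2 : (2 : R) ≠ 0) {n m : ℕ}
    (hnm : n < m) (h : (X ^ n + X ^ m : R[X]).comp (-1 - X) = X ^ n + X ^ m) :
    (n = 1 ∧ m = 2) ∨ ((n : R) = 0 ∧ (m : R) = 0) := by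
  have hcoeff (i : ℕ) := congrArg (coeff · i) h
  simp only [add_comp, X_pow_comp, coeff_add, coeff_neg_one_sub_X_pow, coeff_X_pow] at hcoeff
  have hm1 : (-1 : R) ^ m = 1 := by
    simpa [hnm.ne', Nat.choose_eq_zero_of_lt hnm] using hcoeff m
  have hn0 : n ≠ 0 := by
    rintro rfl
    have := hcoeff 0
    simp only [pow_zero, Nat.choose_zero_right, hm1, if_pos, if_neg hnm.ne] at this
    exact h2 (by linear_combination 2 * this)
  have hn1 : (-1 : R) ^ n = -1 := by
    have := hcoeff 0
    simp only [Nat.choose_zero_right, hm1, if_neg hn0.symm, if_neg (show 0 ≠ m by omega)] at this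
    linear_combination this
  have hc1 : (m : R) - n = if 1 = n then 1 else 0 := by
    have := hcoeff 1
    simp only [Nat.choose_one_right, hm1, hn1, if_neg (show 1 ≠ m by omega)] at this
    linear_combination this
  obtain rfl | hnm' := eq_or_ne m (n + 1)
  · left
    have : n = 1 := by
      by_contra hn
      rw [if_neg (Ne.symm hn), Nat.cast_add_one] at hc1
      exact h2 (by linear_combination 2 * hc1)
    omega
  · right
    have hm : (m : R) = 0 := by
      have := hcoeff (m - 1)
      rw [Nat.choose_eq_zero_of_lt (by omega), Nat.choose_symm (by omega), Nat.choose_one_right,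
        if_neg (by omega), if_neg (by omega), hm1] at this
      simpa using this
    refine ⟨?_, hm⟩
    split_ifs at hc1 with hn
    · subst hn
      exact absurd (by linear_combination -hc1 + hm) h2
    · linear_combination -hc1 + hm

end CommRing

lemma X_pow_add_X_pow_eq_expand {S : Type*} [CommSemiring S] {p n m : ℕ} (hn : p ∣ n)
    (hm : p ∣ m) : (X ^ n + X ^ m : S[X]) = expand S p (X ^ (n / p) + X ^ (m / p)) := by
  rw [map_add, map_pow, map_pow, expand_X, ← pow_mul, ← pow_mul, Nat.mul_div_cancel' hn,
    Nat.mul_div_cancel' hm]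

section CharP

variable {R : Type*} [CommRing R] (p : ℕ) [Fact p.Prime] [CharP R p]

lemma expand_comp_X_add_X_sq (g : R[X]) :
    expand R p (g.comp (X + X ^ 2)) = (expand R p g).comp (X + X ^ 2) := by
  rw [expand_eq_comp_X_pow, expand_eq_comp_X_pow, comp_assoc, comp_assoc, X_pow_comp, add_comp,
    X_comp, X_pow_comp, add_pow_char, ← pow_mul, ← pow_mul, mul_comm p 2]

lemma X_pow_char_pow_comp_X_add_X_sq (k : ℕ) :
    (X ^ p ^ k : R[X]).comp (X + X ^ 2) = X ^ p ^ k + X ^ (2 * p ^ k) := by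
  rw [X_pow_comp, add_pow_char_pow, ← pow_mul, mul_comm]

end CharP

section Domain

variable {R : Type*} [CommRing R] [IsDomain R]

lemma comp_X_add_X_sq_eq_zero_iff {g : R[X]} : g.comp (X + X ^ 2) = 0 ↔ g = 0 := by
  refine ⟨fun h ↦ (comp_eq_zero_iff.mp h).resolve_right fun ⟨_, hc⟩ ↦ ?_,
    fun h ↦ by rw [h, zero_comp]⟩
  simpa [coeff_X] using congrArg (coeff · 2) hc

lemma eq_X_of_comp_X_add_X_sq_eq {a : R[X]} (h : a.comp (X + X ^ 2) = X + X ^ 2) : a = X :=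
  sub_eq_zero.mp <| comp_X_add_X_sq_eq_zero_iff.mp <| by rw [sub_comp, h, X_comp, sub_self]

lemma derivative_eq_zero_of_derivative_comp_X_add_X_sq {a : R[X]}
    (h : derivative (a.comp (X + X ^ 2)) = 0) : derivative a = 0 := by
  have hw : derivative (X + X ^ 2 : R[X]) ≠ 0 := fun hw ↦ by simpa using congrArg (coeff · 0) hw
  rw [derivative_comp, mul_eq_zero] at h
  exact comp_X_add_X_sq_eq_zero_iff.mp (h.resolve_left hw)

theorem exists_eq_X_pow_char_pow_of_comp_X_add_X_sq_eq (p : ℕ) [Fact p.Prime] [CharP R p]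
    (h2 : (2 : R) ≠ 0) {a : R[X]} {n m : ℕ} (hnm : n < m)
    (h : a.comp (X + X ^ 2) = X ^ n + X ^ m) : ∃ k, a = X ^ p ^ k := by
  induction m using Nat.strong_induction_on generalizing n a with
  | _ m ih =>
  have hsymm : (X ^ n + X ^ m : R[X]).comp (-1 - X) = X ^ n + X ^ m := by
    rw [← h, comp_assoc, X_add_X_sq_comp_neg_one_sub_X]
  obtain ⟨rfl, rfl⟩ | ⟨hn, hm⟩ :=
    eq_one_and_eq_two_or_cast_eq_zero_of_comp_neg_one_sub_X h2 hnm hsymm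
  · rw [pow_one] at h
    exact ⟨0, by rw [pow_zero, pow_one, eq_X_of_comp_X_add_X_sq_eq h]⟩
  have ha : derivative a = 0 := by
    refine derivative_eq_zero_of_derivative_comp_X_add_X_sq ?_
    simp [h, derivative_X_pow, hn, hm]
  have hp := (Fact.out : p.Prime)
  rw [CharP.cast_eq_zero_iff R p] at hn hm
  set b := contract p a
  have hab : expand R p b = a := expand_contract p ha hp.ne_zero
  have hb : b.comp (X + X ^ 2) = X ^ (n / p) + X ^ (m / p) := by
    apply expand_injective hp.pos
    rw [expand_comp_X_add_X_sq, hab, h, X_pow_add_X_pow_eq_expand hn hm]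
  obtain ⟨k, hk⟩ := ih (m / p) (Nat.div_lt_self (by omega) hp.one_lt)
    (Nat.div_lt_div_of_lt_of_dvd hm hnm) hb
  exact ⟨k + 1, by rw [← hab, hk, map_pow, expand_X, ← pow_mul, pow_succ']⟩

end Domain

end Polynomial

theorem stmt0 (p : ℕ) [Fact p.Prime] (hp : Odd p) (a : Polynomial (ZMod p)) :
    ((∃ n m : ℕ, n ≠ m ∧
        Polynomial.aeval ((Polynomial.X : Polynomial (ZMod p)) + Polynomial.X ^ 2) a =
          Polynomial.X ^ n + Polynomial.X ^ m) ↔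
      ∃ k : ℕ, a = Polynomial.X ^ (p ^ k)) ∧
    ∀ k : ℕ,
      Polynomial.aeval ((Polynomial.X : Polynomial (ZMod p)) + Polynomial.X ^ 2)
          ((Polynomial.X : Polynomial (ZMod p)) ^ (p ^ k)) =
        Polynomial.X ^ (p ^ k) + Polynomial.X ^ (2 * p ^ k) := by
  have h2 : (2 : ZMod p) ≠ 0 := Ring.two_ne_zero <| by
    rw [ZMod.ringChar_zmod_n]
    rintro rfl
    exact Nat.not_odd_iff_even.mpr even_two hp
  simp only [← comp_eq_aeval]
  refine ⟨⟨fun ⟨n, m, hne, h⟩ ↦ ?_, fun ⟨k, hk⟩ ↦ ?_⟩, X_pow_char_pow_comp_X_add_X_sq p⟩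
  · rcases hne.lt_or_gt with hnm | hmn
    · exact exists_eq_X_pow_char_pow_of_comp_X_add_X_sq_eq p h2 hnm h
    · exact exists_eq_X_pow_char_pow_of_comp_X_add_X_sq_eq p h2 hmn (h.trans (add_comm _ _))
  · refine ⟨p ^ k, 2 * p ^ k, ?_, hk ▸ X_pow_char_pow_comp_X_add_X_sq p k⟩
    have := pow_pos (Fact.out : p.Prime).pos k
    omega
end

section
/- Let p be an odd prime and n a positive natural number. The polynomial (X + X^2)^n over F_p has exactly two nonzero terms if and only if n is a power of p. -/
/-!
Since `X + X ^ 2 = X * (X + 1)`, the coefficients of `(X + X ^ 2) ^ n` are the binomial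
coefficients `n.choose k`, shifted by `n`. The outer two never vanish, so there are exactly two
nonzero terms iff `p ∣ n.choose k` for all `0 < k < n`. This holds for `n = p ^ a`; conversely,
writing `n = p ^ v * m` with `p ∤ m`, Lucas' theorem gives `n.choose (p ^ v) ≡ m [MOD p]`,
which forces `m = 1`.
-/

open Polynomial Finset

theorem Nat.Prime.forall_dvd_choose_iff_exists_eq_pow {p n : ℕ} (hp : p.Prime) (hn : n ≠ 0) :
    (∀ k, 0 < k → k < n → p ∣ n.choose k) ↔ ∃ a, n = p ^ a := by
  have : Fact p.Prime := ⟨hp⟩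
  refine ⟨fun h => ⟨_, Choose.eq_pow_multiplicity_of_choose_modEq_zero_nat
    (Nat.pos_of_ne_zero hn) fun k hk => Nat.modEq_zero_iff_dvd.mpr ?_⟩, ?_⟩
  · obtain ⟨hk_pos, hk_le⟩ := mem_Icc.mp hk
    exact h k hk_pos (by omega)
  · rintro ⟨a, rfl⟩ k hk hkn
    exact hp.dvd_choose_pow hk.ne' hkn.ne

namespace Polynomial

variable {R : Type*} [Semiring R]

theorem coeff_X_add_X_sq_pow (n k : ℕ) :
    ((X + X ^ 2 : R[X]) ^ n).coeff k = if n ≤ k then (n.choose (k - n) : R) else 0 := by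
  rw [show (X + X ^ 2 : R[X]) = X * (X + 1) by rw [mul_add, mul_one, sq, add_comm],
    (commute_X _).mul_pow, coeff_X_pow_mul', coeff_X_add_one_pow]

theorem card_support_X_add_X_sq_pow_eq_two_iff [Nontrivial R] {n : ℕ} (hn : n ≠ 0) :
    #((X + X ^ 2 : R[X]) ^ n).support = 2 ↔ ∀ k, 0 < k → k < n → (n.choose k : R) = 0 := by
  set s := ((X + X ^ 2 : R[X]) ^ n).support
  have mem_s {i : ℕ} : i ∈ s ↔ n ≤ i ∧ (n.choose (i - n) : R) ≠ 0 := by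
    simp only [s, mem_support_iff, coeff_X_add_X_sq_pow]
    split_ifs with h <;> simp [h]
  have hpair : {n, 2 * n} ⊆ s := by
    simp [insert_subset_iff, mem_s, two_mul]
  have hcard : #{n, 2 * n} = 2 := card_pair (by omega)
  constructor
  · intro h k hk hkn
    have hs := eq_of_subset_of_card_le hpair (by rw [h, hcard])
    by_contra hne
    have : k + n ∈ ({n, 2 * n} : Finset ℕ) := hs ▸ mem_s.mpr (by simpa using hne)
    simp only [mem_insert, mem_singleton] at this
    omega
  · intro h
    rw [← hcard, eq_of_subset_of_card_le hpair (card_le_card fun i hi => ?_)]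
    obtain ⟨hni, hi⟩ := mem_s.mp hi
    have hle : i - n ≤ n := by
      by_contra hlt
      exact hi (by rw [Nat.choose_eq_zero_of_lt (by omega), Nat.cast_zero])
    have : ¬(0 < i - n ∧ i - n < n) := fun ⟨h0, hlt⟩ => hi (h _ h0 hlt)
    simp only [mem_insert, mem_singleton]
    omega

end Polynomial

theorem stmt1_general (p : ℕ) [Fact p.Prime] (n : ℕ) :
    (((Polynomial.X + Polynomial.X ^ 2 : Polynomial (ZMod p)) ^ n).support.card = 2) ↔
      ∃ k : ℕ, n = p ^ k := by
  rcases eq_or_ne n 0 with rfl | hn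
  · rw [pow_zero, ← C_1, support_C one_ne_zero]
    simp [eq_comm (a := 0), (Fact.out : p.Prime).ne_zero]
  rw [card_support_X_add_X_sq_pow_eq_two_iff hn]
  simp only [ZMod.natCast_eq_zero_iff]
  exact (Fact.out : p.Prime).forall_dvd_choose_iff_exists_eq_pow hn

theorem stmt1 (p : ℕ) [Fact p.Prime] (hp : Odd p) (n : ℕ) (hn : 0 < n) :
    (((Polynomial.X + Polynomial.X ^ 2 : Polynomial (ZMod p)) ^ n).support.card = 2) ↔
      ∃ k : ℕ, n = p ^ k :=
  stmt1_general p n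
end

section
/- Let p = 2 and consider the ring homomorphism φ from F_2[t] to F_2[F] (commutative polynomials) determined by φ(t) = F + F^3. Then for a ∈ F_2[t], φ(a) is a sum of exactly two distinct powers of F if and only if a = t^(2^k) for some k ≥ 0, in which case φ(a) = F^(2^k) + F^(3·2^k). -/
/-!
Write `φ` for substitution of `u = X + X ^ 3 = X * (1 + X) ^ 2`. Every `a ∈ 𝔽₂[t]` is
`b ^ 2 + t * c ^ 2`, and then `φ a = (φ b) ^ 2 + X * ((1 + X) * φ c) ^ 2`. Since a polynomial over
`𝔽₂` splits uniquely as `p ^ 2 + X * q ^ 2`, an equation `φ a = X ^ n + X ^ m` splits into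
equations for `φ b` and for `(1 + X) * φ c` with the exponents roughly halved. Strong induction on
the exponents shows that `φ b` can only be such a binomial for `b = t ^ 2 ^ k`, and
`(1 + X) * φ c` only for `c = 1`.
-/

open Polynomial

section CharTwo

variable {R : Type*} [CommRing R] [CharP R 2]

theorem derivative_sq_add_X_mul_sq (p q : R[X]) : derivative (p ^ 2 + X * q ^ 2) = q ^ 2 := by
  simp [derivative_sq, CharTwo.two_eq_zero]

theorem sq_add_X_mul_sq_inj [NoZeroDivisors R] {p q p' q' : R[X]}
    (h : p ^ 2 + X * q ^ 2 = p' ^ 2 + X * q' ^ 2) : p = p' ∧ q = q' := by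
  have sq_inj : Function.Injective fun r : R[X] => r ^ 2 := frobenius_inj R[X] 2
  obtain rfl : q = q' :=
    sq_inj (by simpa only [derivative_sq_add_X_mul_sq] using congrArg derivative h)
  exact ⟨sq_inj (add_right_cancel h), rfl⟩

theorem exists_eq_sq_add_X_mul_sq [PerfectRing R 2] (f : R[X]) :
    ∃ p q : R[X], f = p ^ 2 + X * q ^ 2 := by
  induction f using Polynomial.induction_on' with
  | add f g hf hg =>
    obtain ⟨p, q, rfl⟩ := hf
    obtain ⟨p', q', rfl⟩ := hg
    exact ⟨p + p', q + q', by rw [CharTwo.add_sq, CharTwo.add_sq]; ring⟩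
  | monomial n r =>
    obtain ⟨s, rfl⟩ : ∃ s, s ^ 2 = r :=
      ⟨(frobeniusEquiv R 2).symm r, frobenius_apply_frobeniusEquiv_symm R 2 r⟩
    rw [← C_mul_X_pow_eq_monomial, C_pow]
    rcases Nat.even_or_odd' n with ⟨k, rfl | rfl⟩
    · exact ⟨C s * X ^ k, 0, by ring⟩
    · exact ⟨0, C s * X ^ k, by ring⟩

theorem one_add_X_mul_ne_X_pow [Nontrivial R] (g : R[X]) (k : ℕ) : (1 + X) * g ≠ X ^ k :=
  fun h => by simpa [CharTwo.add_self_eq_zero] using congrArg (eval 1) h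

end CharTwo

theorem one_add_X_mul_X_pow {R : Type*} [CommSemiring R] (e : ℕ) :
    (1 + X : R[X]) * X ^ e = (X ^ ((e + 1) / 2)) ^ 2 + X * (X ^ (e / 2)) ^ 2 := by
  rcases Nat.even_or_odd' e with ⟨k, rfl | rfl⟩
  · rw [show (2 * k + 1) / 2 = k by omega, show 2 * k / 2 = k by omega]; ring
  · rw [show (2 * k + 1 + 1) / 2 = k + 1 by omega, show (2 * k + 1) / 2 = k by omega]; ring

theorem one_add_X_ne_zero {R : Type*} [Semiring R] [Nontrivial R] : (1 + X : R[X]) ≠ 0 :=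
  fun h => by simpa using congrArg (eval 0) h

local notation "φ" => aeval (R := ZMod 2) (X + X ^ 3 : (ZMod 2)[X])

theorem X_add_X_pow_three_eq : (X + X ^ 3 : (ZMod 2)[X]) = X * (1 + X) ^ 2 := by
  rw [CharTwo.add_sq]; ring

theorem aeval_sq_add_X_mul_sq (b c : (ZMod 2)[X]) :
    φ (b ^ 2 + X * c ^ 2) = φ b ^ 2 + X * ((1 + X) * φ c) ^ 2 := by
  simp only [map_add, map_mul, map_pow, aeval_X, X_add_X_pow_three_eq]; ring

theorem aeval_injective : Function.Injective φ := by
  have hdeg : (X + X ^ 3 : (ZMod 2)[X]).natDegree = 3 := by compute_degree!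
  refine transcendental_iff_injective.mp <| Polynomial.transcendental _ (by omega) <|
    mem_nonZeroDivisors_of_ne_zero <| leadingCoeff_ne_zero.mpr ?_
  exact ne_zero_of_natDegree_gt (n := 0) (by omega)

theorem eval_one_aeval_eq_eval_zero (c : (ZMod 2)[X]) : (φ c).eval 1 = (φ c).eval 0 := by
  simp [← comp_eq_aeval, eval_comp, CharTwo.add_self_eq_zero]

theorem eq_zero_and_eq_one_of_one_add_X_mul_aeval_eq {c : (ZMod 2)[X]} {e f : ℕ} (hef : e < f)
    (h : (1 + X) * φ c = X ^ e + X ^ f) : e = 0 ∧ f = 1 := by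
  induction f using Nat.strong_induction_on generalizing c e with
  | _ f ih =>
  have h_ne : ∀ g : (ZMod 2)[X], g.eval 1 ≠ g.eval 0 → (1 + X) * φ c ≠ (1 + X) * g :=
    fun g hg hc => hg <| by
      rw [← mul_left_cancel₀ one_add_X_ne_zero hc, eval_one_aeval_eq_eval_zero]
  rcases Nat.lt_or_ge f 2 with hf | hf
  · omega
  obtain ⟨b, c', rfl⟩ := exists_eq_sq_add_X_mul_sq c
  -- Multiplying by `1 + X` once more brings `(1 + X) * φ (b ^ 2 + X * c' ^ 2)` back to the shape
  -- `p ^ 2 + X * q ^ 2` with `p = (1 + X) * φ b`.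
  have hb : (1 + X) * φ b = X ^ ((e + 1) / 2) + X ^ ((f + 1) / 2) := by
    refine (sq_add_X_mul_sq_inj (q := (1 + X) ^ 2 * φ c')
      (q' := X ^ (e / 2) + X ^ (f / 2)) ?_).1
    calc ((1 + X) * φ b) ^ 2 + X * ((1 + X) ^ 2 * φ c') ^ 2
        = (1 + X) * ((1 + X) * φ (b ^ 2 + X * c' ^ 2)) := by rw [aeval_sq_add_X_mul_sq]; ring
      _ = (1 + X) * X ^ e + (1 + X) * X ^ f := by rw [h]; ring
      _ = _ := by
        rw [one_add_X_mul_X_pow, one_add_X_mul_X_pow, CharTwo.add_sq, CharTwo.add_sq]; ring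
  rcases (Nat.div_le_div_right (c := 2) (show e + 1 ≤ f + 1 by omega)).eq_or_lt with heq | hlt
  · obtain ⟨r, rfl, rfl⟩ : ∃ r, e = 2 * r + 1 ∧ f = 2 * r + 2 := ⟨e / 2, by omega, by omega⟩
    exact absurd (h.trans (by ring)) (h_ne (X ^ (2 * r + 1)) (by simp))
  · obtain ⟨rfl, rfl⟩ : e = 0 ∧ f = 2 := by have := ih _ (by omega) hlt hb; omega
    refine absurd (h.trans ?_) (h_ne (1 + X) (by simp))
    linear_combination (-X) * (CharTwo.two_eq_zero : (2 : (ZMod 2)[X]) = 0)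

theorem exists_eq_X_pow_two_pow_of_aeval_eq {a : (ZMod 2)[X]} {n m : ℕ} (hnm : n < m)
    (h : φ a = X ^ n + X ^ m) : ∃ k, a = X ^ 2 ^ k := by
  induction m using Nat.strong_induction_on generalizing a n with
  | _ m ih =>
  obtain ⟨b, c, rfl⟩ := exists_eq_sq_add_X_mul_sq a
  rw [aeval_sq_add_X_mul_sq] at h
  rcases Nat.even_or_odd' n with ⟨r, rfl | rfl⟩ <;> rcases Nat.even_or_odd' m with ⟨s, rfl | rfl⟩
  · obtain ⟨hb, hc⟩ := sq_add_X_mul_sq_inj (p' := X ^ r + X ^ s) (q' := 0)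
      (h.trans (by rw [CharTwo.add_sq]; ring))
    obtain ⟨k, rfl⟩ := ih s (by omega) (by omega) hb
    obtain rfl : c = 0 := aeval_injective (by simpa [one_add_X_ne_zero] using hc)
    exact ⟨k + 1, by ring⟩
  · exact absurd (sq_add_X_mul_sq_inj (p' := X ^ r) (q' := X ^ s) (h.trans (by ring))).2
      (one_add_X_mul_ne_X_pow _ s)
  · exact absurd (sq_add_X_mul_sq_inj (p' := X ^ s) (q' := X ^ r) (h.trans (by ring))).2
      (one_add_X_mul_ne_X_pow _ r)
  · obtain ⟨hb, hc⟩ := sq_add_X_mul_sq_inj (p' := 0) (q' := X ^ r + X ^ s)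
      (h.trans (by rw [CharTwo.add_sq]; ring))
    obtain ⟨rfl, rfl⟩ := eq_zero_and_eq_one_of_one_add_X_mul_aeval_eq (by omega) hc
    obtain rfl : b = 0 := aeval_injective (by simpa using hb)
    obtain rfl : c = 1 := aeval_injective <|
      mul_left_cancel₀ one_add_X_ne_zero (by rw [hc, map_one]; ring)
    exact ⟨0, by ring⟩

theorem aeval_X_pow_two_pow (k : ℕ) : φ (X ^ 2 ^ k) = X ^ 2 ^ k + X ^ (3 * 2 ^ k) := by
  rw [map_pow, aeval_X, add_pow_char_pow, ← pow_mul, mul_comm]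

theorem stmt2 (a : Polynomial (ZMod 2)) :
    ((∃ n m : ℕ, n ≠ m ∧
        Polynomial.aeval ((Polynomial.X : Polynomial (ZMod 2)) + Polynomial.X ^ 3) a =
          Polynomial.X ^ n + Polynomial.X ^ m) ↔
      ∃ k : ℕ, a = Polynomial.X ^ (2 ^ k)) ∧
    ∀ k : ℕ,
      Polynomial.aeval ((Polynomial.X : Polynomial (ZMod 2)) + Polynomial.X ^ 3)
          ((Polynomial.X : Polynomial (ZMod 2)) ^ (2 ^ k)) =
        Polynomial.X ^ (2 ^ k) + Polynomial.X ^ (3 * 2 ^ k) := by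
  refine ⟨⟨fun ⟨n, m, hnm, h⟩ => ?_, fun ⟨k, hk⟩ => ⟨2 ^ k, 3 * 2 ^ k, ?_, ?_⟩⟩,
    aeval_X_pow_two_pow⟩
  · rcases hnm.lt_or_gt with hlt | hlt
    · exact exists_eq_X_pow_two_pow_of_aeval_eq hlt h
    · exact exists_eq_X_pow_two_pow_of_aeval_eq hlt (h.trans (add_comm _ _))
  · have := Nat.one_le_two_pow (n := k)
    omega
  · rw [hk, aeval_X_pow_two_pow]
end

section
/- Let S₁ and S₂ each be a finite union of cosets of subsemigroups of ℕ^k, where a subsemigroup of ℕ^k means a set of the form L ∩ ℕ^k for L a subgroup of ℤ^k, and a coset means a set v + (L ∩ ℕ^k) with v ∈ ℕ^k. Then S₁ ∩ S₂ is again a finite union of cosets of subsemigroups of ℕ^k. -/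
/-!
The intersection of two cosets `v₁ + L₁ ∩ ℕ^k` and `v₂ + L₂ ∩ ℕ^k` is a set `T` any two of
whose points differ by an element of `L₁ ∩ L₂`, and which contains `y + (L₁ ∩ L₂) ∩ ℕ^k`
for each of its points `y`. Such a set is the union of the cosets of `(L₁ ∩ L₂) ∩ ℕ^k` at
its minimal points, and by Dickson's lemma (`ℕ^k` is well quasi-ordered) there are only
finitely many of these. Distributing the intersection over the two finite unions gives
the theorem.
-/

/-- A finite union of cosets of subsemigroups of ℕ^k, where a subsemigroup of ℕ^k
is the intersection of a subgroup of ℤ^k with ℕ^k. -/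
def IsFinUnionCosets {k : ℕ} (S : Set (Fin k → ℕ)) : Prop :=
  ∃ (n : ℕ) (v : Fin n → (Fin k → ℕ)) (L : Fin n → AddSubgroup (Fin k → ℤ)),
    S = ⋃ i : Fin n,
      {x : Fin k → ℕ | ∃ w ∈ L i, (∀ j, 0 ≤ w j) ∧ ∀ j, (x j : ℤ) = (v i j : ℤ) + w j}

open Set

universe u

theorem Set.finite_setOf_minimal {α : Type*} [PartialOrder α] [WellQuasiOrderedLE α]
    (P : α → Prop) : {x | Minimal P x}.Finite :=
  (setOfPred_minimal_antichain P).finite_of_partiallyWellOrderedOn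
    (Set.isPWO_of_wellQuasiOrderedLE _)

variable {k : ℕ}

def natCoset (v : Fin k → ℕ) (L : AddSubgroup (Fin k → ℤ)) : Set (Fin k → ℕ) :=
  {x | ∃ w ∈ L, (∀ j, 0 ≤ w j) ∧ ∀ j, (x j : ℤ) = (v j : ℤ) + w j}

section natCoset

variable {v x y : Fin k → ℕ} {L L' : AddSubgroup (Fin k → ℤ)}

theorem mem_natCoset :
    x ∈ natCoset v L ↔ (Nat.cast ∘ x - Nat.cast ∘ v : Fin k → ℤ) ∈ L ∧ v ≤ x := by
  constructor
  · rintro ⟨w, hw, hw_nonneg, hx⟩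
    have hw_eq : (Nat.cast ∘ x - Nat.cast ∘ v : Fin k → ℤ) = w := by
      funext j; simp [hx j]
    exact ⟨hw_eq ▸ hw, fun j => by exact_mod_cast (by linarith [hw_nonneg j, hx j] : (v j : ℤ) ≤ x j)⟩
  · rintro ⟨hL, hle⟩
    exact ⟨_, hL, fun j => by simpa using hle j, fun j => by simp⟩

theorem mem_natCoset_of_mem_natCoset (hy : y ∈ natCoset v L) (hx : x ∈ natCoset y L) :
    x ∈ natCoset v L := by
  rw [mem_natCoset] at *
  refine ⟨?_, hy.2.trans hx.2⟩
  simpa using add_mem hx.1 hy.1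

theorem sub_mem_of_mem_natCoset (hx : x ∈ natCoset v L) (hy : y ∈ natCoset v L) :
    (Nat.cast ∘ x - Nat.cast ∘ y : Fin k → ℤ) ∈ L := by
  simpa using sub_mem (mem_natCoset.1 hx).1 (mem_natCoset.1 hy).1

theorem natCoset_mono (h : L ≤ L') : natCoset v L ⊆ natCoset v L' := fun _ hx =>
  mem_natCoset.2 ⟨h (mem_natCoset.1 hx).1, (mem_natCoset.1 hx).2⟩

end natCoset

namespace IsFinUnionCosets

theorem iff_exists_finite_index {S : Set (Fin k → ℕ)} :
    IsFinUnionCosets S ↔ ∃ (ι : Type u) (_ : Finite ι) (v : ι → Fin k → ℕ)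
      (L : ι → AddSubgroup (Fin k → ℤ)), S = ⋃ i, natCoset (v i) (L i) := by
  constructor
  · rintro ⟨n, v, L, rfl⟩
    exact ⟨ULift (Fin n), inferInstance, fun i => v i.down, fun i => L i.down,
      (Equiv.ulift.iSup_comp (g := fun i => natCoset (v i) (L i))).symm⟩
  · rintro ⟨ι, _, v, L, rfl⟩
    obtain ⟨n, ⟨e⟩⟩ := Finite.exists_equiv_fin ι
    exact ⟨n, v ∘ e.symm, L ∘ e.symm,
      (e.symm.iSup_comp (g := fun i => natCoset (v i) (L i))).symm⟩

theorem iUnion {ι : Type*} [Finite ι] {S : ι → Set (Fin k → ℕ)}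
    (h : ∀ i, IsFinUnionCosets (S i)) : IsFinUnionCosets (⋃ i, S i) := by
  choose n v L hS using h
  refine iff_exists_finite_index.2 ⟨Σ i, Fin (n i), inferInstance, fun p => v p.1 p.2,
    fun p => L p.1 p.2, ?_⟩
  rw [iUnion_sigma]
  exact iUnion_congr fun i => hS i

theorem of_sub_mem_of_natCoset_subset (L : AddSubgroup (Fin k → ℤ)) {T : Set (Fin k → ℕ)}
    (hsub : ∀ x ∈ T, ∀ y ∈ T, (Nat.cast ∘ x - Nat.cast ∘ y : Fin k → ℤ) ∈ L)
    (hup : ∀ y ∈ T, natCoset y L ⊆ T) : IsFinUnionCosets T := by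
  set M := {v | Minimal (· ∈ T) v}
  have hT : T = ⋃ v : M, natCoset v L := by
    refine Subset.antisymm (fun x hx => ?_) (iUnion_subset fun v => hup v v.2.1)
    obtain ⟨v, hvx, hv⟩ := (Set.isPWO_of_wellQuasiOrderedLE T).exists_le_minimal hx
    exact mem_iUnion.2 ⟨⟨v, hv⟩, mem_natCoset.2 ⟨hsub x hx v hv.1, hvx⟩⟩
  have : Finite M := (Set.finite_setOf_minimal _).to_subtype
  exact iff_exists_finite_index.2 ⟨M, this, (↑), fun _ => L, hT⟩

theorem natCoset_inter_natCoset (v₁ v₂ : Fin k → ℕ) (L₁ L₂ : AddSubgroup (Fin k → ℤ)) :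
    IsFinUnionCosets (natCoset v₁ L₁ ∩ natCoset v₂ L₂) := by
  refine of_sub_mem_of_natCoset_subset (L₁ ⊓ L₂) ?_ ?_
  · rintro x ⟨hx₁, hx₂⟩ y ⟨hy₁, hy₂⟩
    exact ⟨sub_mem_of_mem_natCoset hx₁ hy₁, sub_mem_of_mem_natCoset hx₂ hy₂⟩
  · rintro y ⟨hy₁, hy₂⟩ x hx
    exact ⟨mem_natCoset_of_mem_natCoset hy₁ (natCoset_mono inf_le_left hx),
      mem_natCoset_of_mem_natCoset hy₂ (natCoset_mono inf_le_right hx)⟩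

end IsFinUnionCosets

theorem stmt17 {k : ℕ} (S₁ S₂ : Set (Fin k → ℕ))
    (h₁ : IsFinUnionCosets S₁) (h₂ : IsFinUnionCosets S₂) :
    IsFinUnionCosets (S₁ ∩ S₂) := by
  obtain ⟨n₁, v₁, L₁, rfl⟩ := h₁
  obtain ⟨n₂, v₂, L₂, rfl⟩ := h₂
  change IsFinUnionCosets ((⋃ i, natCoset (v₁ i) (L₁ i)) ∩ ⋃ j, natCoset (v₂ j) (L₂ j))
  rw [iUnion_inter_iUnion]
  exact IsFinUnionCosets.iUnion fun i => IsFinUnionCosets.iUnion fun j =>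
    IsFinUnionCosets.natCoset_inter_natCoset _ _ _ _
end
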